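/- The second Lie derivative of the biomass output contains the parameter c through the term ∂(L_f² h₁)/∂c = −μ_max²·s²·(x_crit − x)·b²/(x_crit²·(K_s+s)²), which is strictly negative whenever b > 0, s > 0, and 0 ≤ x < x_crit. -/

import Mathlib

/-! `c` enters the drift only through `ẋ = cμb − Dx`, so `L_f² h₁` is affine in `c` with slope
`b · ∂μ/∂x · μb`, which is minus a product of squares and of `x_crit − x`. -/

noncomputable def growthRate (μmax Ks xcrit s x : ℝ) : ℝ := μmax * (s / (Ks + s)) * (1 - x / xcrit)

theorem slope_c_lie2_eq (μmax Ks xcrit s x b : ℝ) :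
    b * (-(μmax * s) / ((Ks + s) * xcrit) * (growthRate μmax Ks xcrit s x * b))
      = -(μmax ^ 2 * s ^ 2 * (xcrit - x) * b ^ 2) / (xcrit ^ 2 * (Ks + s) ^ 2) := by
  unfold growthRate
  rcases eq_or_ne xcrit 0 with hxcrit | hxcrit
  · simp [hxcrit]
  rcases eq_or_ne (Ks + s) 0 with hKs | hKs
  · simp [hKs]
  field_simp

theorem slope_c_lie2_neg {μmax Ks xcrit s x b : ℝ} (hμmax : 0 < μmax) (hKs : 0 < Ks)
    (hxcrit : 0 < xcrit) (hb : 0 < b) (hs : 0 < s) (hx : x < xcrit) :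
    -(μmax ^ 2 * s ^ 2 * (xcrit - x) * b ^ 2) / (xcrit ^ 2 * (Ks + s) ^ 2) < 0 := by
  have hxcrit_sub : 0 < xcrit - x := sub_pos.2 hx
  exact div_neg_of_neg_of_pos (neg_neg_of_pos (by positivity)) (by positivity)

theorem lie2_partial_c_general (μmax Ks xcrit Y D sin b s x : ℝ)
    (hμmax : 0 < μmax) (hKs : 0 < Ks) (hxcrit : 0 < xcrit) :
    (∀ c : ℝ, HasDerivAt
      (fun c' : ℝ =>
        (μmax * (s / (Ks + s)) * (1 - x / xcrit) - D) *
          (μmax * (s / (Ks + s)) * (1 - x / xcrit) * b - D * b)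
        + b * ((μmax * Ks / (Ks + s) ^ 2 * (1 - x / xcrit)) *
                (-(1 / Y) * (μmax * (s / (Ks + s)) * (1 - x / xcrit)) * b
                  + D * (sin - s))
             + (-(μmax * s) / ((Ks + s) * xcrit)) *
                (c' * (μmax * (s / (Ks + s)) * (1 - x / xcrit)) * b - D * x)))
      (-(μmax ^ 2 * s ^ 2 * (xcrit - x) * b ^ 2)
          / (xcrit ^ 2 * (Ks + s) ^ 2)) c) ∧
    (0 < b → 0 < s → 0 ≤ x → x < xcrit →
      -(μmax ^ 2 * s ^ 2 * (xcrit - x) * b ^ 2)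
          / (xcrit ^ 2 * (Ks + s) ^ 2) < 0) := by
  refine ⟨fun c => ?_, fun hb hs _ hx => slope_c_lie2_neg hμmax hKs hxcrit hb hs hx⟩
  rw [← slope_c_lie2_eq]
  refine .const_add _ (.const_mul b (.const_add _ (.const_mul _ ?_)))
  exact ((((hasDerivAt_id' c).mul_const (growthRate μmax Ks xcrit s x)).mul_const b).sub_const
    (D * x)).congr_deriv (by rw [one_mul])

/-- The second Lie derivative of the biomass output h₁ = b along the drift of
the bioreactor depends on the parameter c through
∂(L_f² h₁)/∂c = −μ_max²·s²·(x_crit − x)·b²/(x_crit²·(K_s+s)²), which is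
strictly negative whenever b > 0, s > 0, 0 ≤ x < x_crit.
Here L_f² h₁ = (μ − D)(μb − Db) + b·(∂μ/∂s · ṡ + ∂μ/∂x · ẋ), with
∂μ/∂s = μ_max K_s/(K_s+s)²·(1 − x/x_crit), ∂μ/∂x = −μ_max s/((K_s+s)x_crit),
ṡ = −(1/Y)μb + D(s_in − s) and ẋ = cμb − Dx. -/
theorem lie2_partial_c (μmax Ks xcrit Y D sin b s x : ℝ)
    (hμmax : 0 < μmax) (hKs : 0 < Ks) (hxcrit : 0 < xcrit)
    (hY : 0 < Y) (hD : 0 < D) (hsin : 0 < sin) :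
    (∀ c : ℝ, HasDerivAt
      (fun c' : ℝ =>
        (μmax * (s / (Ks + s)) * (1 - x / xcrit) - D) *
          (μmax * (s / (Ks + s)) * (1 - x / xcrit) * b - D * b)
        + b * ((μmax * Ks / (Ks + s) ^ 2 * (1 - x / xcrit)) *
                (-(1 / Y) * (μmax * (s / (Ks + s)) * (1 - x / xcrit)) * b
                  + D * (sin - s))
             + (-(μmax * s) / ((Ks + s) * xcrit)) *
                (c' * (μmax * (s / (Ks + s)) * (1 - x / xcrit)) * b - D * x)))
      (-(μmax ^ 2 * s ^ 2 * (xcrit - x) * b ^ 2)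
          / (xcrit ^ 2 * (Ks + s) ^ 2)) c) ∧
    (0 < b → 0 < s → 0 ≤ x → x < xcrit →
      -(μmax ^ 2 * s ^ 2 * (xcrit - x) * b ^ 2)
          / (xcrit ^ 2 * (Ks + s) ^ 2) < 0) :=
  lie2_partial_c_general μmax Ks xcrit Y D sin b s x hμmax hKs hxcrit
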